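/- If a tileset defined by a finite (or recursive, or recursively enumerable) set of forbidden patterns F admits only quasi-periodic tilings, then there exists a total computable function q : ℕ → ℕ such that for every valid tiling c and every n, the quasi-periodicity function of c at n is at most q(n); i.e., every pattern of c with domain [-n,n]^2 appears in every pattern of c with domain [-q(n),q(n)]^2. -/

import Mathlib

/-- A configuration of the discrete plane. -/
def Config (Q : Type*) := ℤ × ℤ → Q

/-- A pattern: a finite domain together with colors (only values on `dom` matter). -/
structure Pattern (Q : Type*) where
  dom : Finset (ℤ × ℤ)
  val : ℤ × ℤ → Q

/-- The square domain `[-n,n]^2`. -/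
noncomputable def square (n : ℕ) : Finset (ℤ × ℤ) := Finset.Icc (-(n:ℤ), -(n:ℤ)) ((n:ℤ), (n:ℤ))

/-- The rectangle `[a,b] × [c,d]`. -/
noncomputable def rect (a b c d : ℤ) : Finset (ℤ × ℤ) := Finset.Icc (a, c) (b, d)

/-- The pattern of `c` with domain `D`, shifted by `v`. -/
def subPattern {Q : Type*} (c : Config Q) (v : ℤ × ℤ) (D : Finset (ℤ × ℤ)) : Pattern Q :=
  ⟨D, fun x => c (v + x)⟩

/-- `P` appears in the configuration `c`. -/
def Pattern.appearsIn {Q : Type*} (P : Pattern Q) (c : Config Q) : Prop :=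
  ∃ v : ℤ × ℤ, ∀ x ∈ P.dom, c (v + x) = P.val x

/-- `P` appears in the pattern `M`. -/
def Pattern.appearsInPat {Q : Type*} (P M : Pattern Q) : Prop :=
  ∃ v : ℤ × ℤ, ∀ x ∈ P.dom, v + x ∈ M.dom ∧ M.val (v + x) = P.val x

/-- `c` is a valid tiling for the set of forbidden patterns `F`. -/
def ValidFor {Q : Type*} (F : Set (Pattern Q)) (c : Config Q) : Prop :=
  ∀ P ∈ F, ¬ P.appearsIn c

/-- `c` is quasi-periodic: every pattern appearing in `c` appears in every
sufficiently large square pattern of `c`. -/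
def QuasiPeriodic {Q : Type*} (c : Config Q) : Prop :=
  ∀ P : Pattern Q, P.appearsIn c →
    ∃ n : ℕ, ∀ v : ℤ × ℤ, P.appearsInPat (subPattern c v (square n))

/-! Call `m` a recurrence bound for `n` when, in every colouring with no forbidden pattern
anchored in `[-2m, 2m]²`, each `[-n, n]²` pattern lying inside `[-(m+1), m+1]²` reappears
inside `[-m, m]²`. In a valid tiling this property moves the `m`-window one cell at a time
across the plane while keeping a copy of a given pattern, so every `n`-pattern of the tiling
appears in every `m`-window.

A bound exists for each `n` by compactness. Otherwise, recentre the counterexamples at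
their bad patterns and take a limit: it is a valid tiling, hence quasi-periodic, so its
central pattern recurs at distance at most some `K` from any point. Looking from the point
`K + 1` cells closer to the origin then produces, in a late counterexample, a copy of the
bad pattern inside its `m`-window.

Being a recurrence bound only involves colourings of a finite square, which are coded by
base-`k` numerals, so it is a primitive recursive relation between `n` and `m` and the
least bound is computable by unbounded search. -/

section Squares

theorem mem_square {n : ℕ} {z : ℤ × ℤ} : z ∈ square n ↔ z.1.natAbs ≤ n ∧ z.2.natAbs ≤ n := by
  obtain ⟨a, b⟩ := z
  simp only [square, Finset.mem_Icc, Prod.mk_le_mk]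
  omega

theorem zero_mem_square (n : ℕ) : (0 : ℤ × ℤ) ∈ square n := by
  simp [mem_square]

theorem mem_square_zero {z : ℤ × ℤ} : z ∈ square 0 ↔ z = 0 := by
  obtain ⟨a, b⟩ := z
  simp only [mem_square, Prod.mk_eq_zero]
  omega

theorem square_mono {m n : ℕ} (h : m ≤ n) : square m ⊆ square n := fun z hz => by
  rw [mem_square] at hz ⊢
  omega

theorem add_mem_square {z w : ℤ × ℤ} {a b : ℕ} (hz : z ∈ square a) (hw : w ∈ square b) :
    z + w ∈ square (a + b) := by
  rw [mem_square] at hz hw ⊢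
  simp only [Prod.fst_add, Prod.snd_add]
  omega

theorem neg_mem_square {z : ℤ × ℤ} {a : ℕ} (hz : z ∈ square a) : -z ∈ square a := by
  rw [mem_square] at hz ⊢
  simpa using hz

theorem exists_sub_mem_square {z : ℤ × ℤ} {a b : ℕ} (hz : z ∈ square (a + b)) :
    ∃ t ∈ square a, z - t ∈ square b := by
  refine ⟨(max (-(a : ℤ)) (min z.1 a), max (-(a : ℤ)) (min z.2 a)), ?_, ?_⟩ <;>
  · rw [mem_square] at hz ⊢
    simp only [Prod.fst_sub, Prod.snd_sub]
    omega

theorem mem_square_sub_of_forall_add_mem {w : ℤ × ℤ} {n m : ℕ}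
    (h : ∀ x ∈ square n, w + x ∈ square m) : w ∈ square (m - n) := by
  have h₁ := h (n, n) (by simp [mem_square])
  have h₂ := h (-n, -n) (by simp [mem_square])
  rw [mem_square] at h₁ h₂ ⊢
  simp only [Prod.fst_add, Prod.snd_add] at h₁ h₂
  omega

theorem Finset.exists_subset_square (A : Finset (ℤ × ℤ)) : ∃ r, A ⊆ square r :=
  ⟨A.sup fun z => max z.1.natAbs z.2.natAbs, fun z hz => by
    have := Finset.le_sup (f := fun z : ℤ × ℤ => max z.1.natAbs z.2.natAbs) hz
    rw [mem_square]
    omega⟩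

theorem forall_mem_square_iff {n : ℕ} {P : ℤ × ℤ → Prop} :
    (∀ z ∈ square n, P z) ↔ ∀ i < 2 * n + 1, ∀ j < 2 * n + 1, P ((i : ℤ) - n, (j : ℤ) - n) := by
  refine ⟨fun h i hi j hj => h _ (by rw [mem_square]; omega), fun h z hz => ?_⟩
  rw [mem_square] at hz
  have := h (z.1 + n).toNat (by omega) (z.2 + n).toNat (by omega)
  rwa [show ((((z.1 + n).toNat : ℤ) - n, ((z.2 + n).toNat : ℤ) - n) : ℤ × ℤ) = z by
    ext <;> simp <;> omega] at this

theorem exists_mem_square_iff {n : ℕ} {P : ℤ × ℤ → Prop} :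
    (∃ z ∈ square n, P z) ↔ ∃ i < 2 * n + 1, ∃ j < 2 * n + 1, P ((i : ℤ) - n, (j : ℤ) - n) := by
  simpa using (forall_mem_square_iff (P := fun z => ¬ P z)).not

end Squares

section Recurrence

variable {Q : Type*}

def ValidOn (F : Set (Pattern Q)) (g : Config Q) (N : ℕ) : Prop :=
  ∀ T ∈ F, ∀ v ∈ square N, ¬ ∀ x ∈ T.dom, g (v + x) = T.val x

def SquareRecurrent (g : Config Q) (n m : ℕ) : Prop :=
  ∀ p ∈ square (m + 1 - n), ∃ w ∈ square (m - n), ∀ x ∈ square n, g (w + x) = g (p + x)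

def IsRecurrenceBound (F : Set (Pattern Q)) (n m : ℕ) : Prop :=
  n + 1 ≤ m ∧ ∀ g : Config Q, ValidOn F g (2 * m) → SquareRecurrent g n m

def OccursInWindow (c : Config Q) (φ : ℤ × ℤ → Q) (n m : ℕ) (u : ℤ × ℤ) : Prop :=
  ∃ w ∈ square (m - n), ∀ x ∈ square n, c (u + w + x) = φ x

variable {F : Set (Pattern Q)}

theorem ValidOn.mono {g : Config Q} {N N' : ℕ} (hg : ValidOn F g N') (h : N ≤ N') :
    ValidOn F g N :=
  fun T hT v hv => hg T hT v (square_mono h hv)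

theorem ValidOn.shift {g : Config Q} {a b : ℕ} (hg : ValidOn F g (a + b)) {p : ℤ × ℤ}
    (hp : p ∈ square a) : ValidOn F (fun z => g (p + z)) b := fun T hT v hv hocc =>
  hg T hT (p + v) (add_mem_square hp hv) fun x hx => by rw [add_assoc]; exact hocc x hx

theorem ValidFor.validOn {c : Config Q} (hc : ValidFor F c) (u : ℤ × ℤ) (N : ℕ) :
    ValidOn F (fun z => c (u + z)) N := fun T hT v _ hocc =>
  hc T hT ⟨u + v, fun x hx => by rw [add_assoc]; exact hocc x hx⟩

theorem ValidOn.of_eqOn {g g' : Config Q} {N r : ℕ} (hg : ValidOn F g N)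
    (hr : ∀ T ∈ F, T.dom ⊆ square r) (h : ∀ z ∈ square (N + r), g z = g' z) :
    ValidOn F g' N := fun T hT v hv hocc =>
  hg T hT v hv fun x hx => by
    rw [h _ (add_mem_square hv (hr T hT hx))]
    exact hocc x hx

theorem SquareRecurrent.of_eqOn {g g' : Config Q} {n m : ℕ} (hg : SquareRecurrent g n m)
    (hnm : n ≤ m) (h : ∀ z ∈ square (m + 1), g z = g' z) : SquareRecurrent g' n m := by
  intro p hp
  obtain ⟨w, hw, heq⟩ := hg p hp
  refine ⟨w, hw, fun x hx => ?_⟩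
  rw [← h _ (square_mono (by omega) (add_mem_square hw hx)),
    ← h _ (square_mono (by omega) (add_mem_square hp hx)), heq x hx]

theorem IsRecurrenceBound.occursInWindow_of_sub_mem_square_one {n m : ℕ}
    (hm : IsRecurrenceBound F n m) {c : Config Q} (hc : ValidFor F c) {φ : ℤ × ℤ → Q}
    {u v : ℤ × ℤ} (hu : OccursInWindow c φ n m u) (huv : u - v ∈ square 1) :
    OccursInWindow c φ n m v := by
  obtain ⟨hnm, hrec⟩ := hm
  obtain ⟨w, hw, hφ⟩ := hu
  have hp : u - v + w ∈ square (m + 1 - n) :=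
    square_mono (by omega) (add_mem_square huv hw)
  obtain ⟨w', hw', heq⟩ := hrec _ (hc.validOn v (2 * m)) _ hp
  refine ⟨w', hw', fun x hx => ?_⟩
  calc c (v + w' + x) = c (v + (u - v + w + x)) := by rw [add_assoc]; exact heq x hx
    _ = c (u + w + x) := by congr 1; abel
    _ = φ x := hφ x hx

theorem IsRecurrenceBound.occursInWindow_of_sub_mem_square {n m : ℕ}
    (hm : IsRecurrenceBound F n m) {c : Config Q} (hc : ValidFor F c) {φ : ℤ × ℤ → Q}
    {v : ℤ × ℤ} (d : ℕ) :
    ∀ u, u - v ∈ square d → OccursInWindow c φ n m u → OccursInWindow c φ n m v := by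
  induction d with
  | zero =>
    intro u huv hu
    rwa [← sub_eq_zero.1 (mem_square_zero.1 huv)]
  | succ d ih =>
    intro u huv hu
    obtain ⟨t, ht, htv⟩ := exists_sub_mem_square (a := 1) (b := d) (by rwa [add_comm])
    refine ih (u - t) (by rwa [sub_right_comm]) ?_
    exact hm.occursInWindow_of_sub_mem_square_one hc hu (by rwa [sub_sub_cancel])

theorem IsRecurrenceBound.appearsInPat {n m : ℕ} (hm : IsRecurrenceBound F n m)
    {c : Config Q} (hc : ValidFor F c) {P : Pattern Q} (hP : P.dom = square n)
    (happ : P.appearsIn c) (v : ℤ × ℤ) : P.appearsInPat (subPattern c v (square m)) := by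
  obtain ⟨u, hu⟩ := happ
  obtain ⟨d, hd⟩ := Finset.exists_subset_square {u - v}
  have hocc : OccursInWindow c P.val n m u :=
    ⟨0, zero_mem_square _, fun x hx => by rw [add_zero]; exact hu x (hP ▸ hx)⟩
  obtain ⟨w, hw, hφ⟩ :=
    hm.occursInWindow_of_sub_mem_square hc d u (hd (Finset.mem_singleton_self _)) hocc
  refine ⟨w, fun x hx => ⟨?_, ?_⟩⟩
  · rw [hP] at hx
    exact square_mono (by have := hm.1; omega) (add_mem_square hw hx)
  · rw [← hφ x (hP ▸ hx), add_assoc]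
    rfl

end Recurrence

section Compactness

variable {Q : Type*} {F : Set (Pattern Q)}

open Filter in
theorem exists_frequently_eqOn [Finite Q] (h : ℕ → Config Q) :
    ∃ c : Config Q, ∀ (A : Finset (ℤ × ℤ)) (N : ℕ), ∃ m ≥ N, ∀ z ∈ A, h m z = c z := by
  let : TopologicalSpace Q := ⊥
  have : DiscreteTopology Q := ⟨rfl⟩
  obtain ⟨c, -, hc⟩ := (isCompact_univ (X := ℤ × ℤ → Q)).exists_mapClusterPt (f := atTop)
    (u := h) (by simp)
  refine ⟨c, fun A N => frequently_atTop.1 (hc.frequently (p := fun f => ∀ z ∈ A, f z = c z) ?_) N⟩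
  exact (eventually_all_finset A).2 fun z _ =>
    (continuous_apply z).continuousAt.eventually (isOpen_discrete {c z} |>.mem_nhds rfl)

theorem validFor_of_frequently_eqOn {h : ℕ → Config Q} {c : Config Q}
    (hvalid : ∀ m, ValidOn F (h m) m)
    (hc : ∀ (A : Finset (ℤ × ℤ)) (N : ℕ), ∃ m ≥ N, ∀ z ∈ A, h m z = c z) : ValidFor F c := by
  rintro T hT ⟨v, hv⟩
  obtain ⟨N, hN⟩ := Finset.exists_subset_square {v}
  obtain ⟨m, hmN, hm⟩ := hc (T.dom.image (v + ·)) N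
  refine hvalid m T hT v (square_mono hmN (hN (Finset.mem_singleton_self v))) fun x hx => ?_
  rw [hm _ (Finset.mem_image_of_mem _ hx), hv x hx]

theorem exists_isRecurrenceBound [Finite Q]
    (hqp : ∀ c : Config Q, ValidFor F c → QuasiPeriodic c) (n : ℕ) :
    ∃ m, IsRecurrenceBound F n m := by
  by_contra! hbad
  have hcex : ∀ m, ∃ g : Config Q, ∃ p ∈ square (m + 2), ValidOn F g (2 * (m + n + 1)) ∧
      ∀ w ∈ square (m + 1), ∃ x ∈ square n, g (w + x) ≠ g (p + x) := by
    intro m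
    have := hbad (m + n + 1)
    simp only [IsRecurrenceBound, SquareRecurrent, show m + n + 1 + 1 - n = m + 2 by omega,
      show m + n + 1 - n = m + 1 by omega] at this
    push Not at this
    obtain ⟨g, hg, p, hp, hw⟩ := this (by omega)
    exact ⟨g, p, hp, hg, hw⟩
  choose g p hp hg hbadp using hcex
  obtain ⟨c, hc⟩ := exists_frequently_eqOn fun m z => g m (p m + z)
  have hcvalid : ValidFor F c :=
    validFor_of_frequently_eqOn (fun m => ((hg m).mono (by omega)).shift (hp m)) hc
  obtain ⟨K, hK⟩ := hqp c hcvalid ⟨square n, c⟩ ⟨0, fun x _ => by rw [zero_add]⟩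
  obtain ⟨m, hmK, hm⟩ := hc (square (2 * K + 1 + n)) K
  obtain ⟨t, ht, hpt⟩ := exists_sub_mem_square (a := K + 1) (b := m + 1 - K)
    (square_mono (by omega) (hp m))
  obtain ⟨w, hw⟩ := hK (-t)
  have hwK : ∀ x ∈ square n, w + x ∈ square K := fun x hx => (hw x hx).1
  obtain ⟨x, hx, hne⟩ := hbadp m (p m - t + w)
    (square_mono (by omega) (add_mem_square hpt (mem_square_sub_of_forall_add_mem hwK)))
  apply hne
  calc g m (p m - t + w + x) = c (-t + (w + x)) := by
        rw [← hm _ (square_mono (by omega) (add_mem_square (neg_mem_square ht) (hwK x hx)))]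
        congr 1
        abel
    _ = c x := (hw x hx).2
    _ = g m (p m + x) := (hm x (square_mono (by omega) hx)).symm

end Compactness

theorem Nat.ofDigits_div_pow_mod {k : ℕ} {L : List ℕ} (hL : ∀ l ∈ L, l < k) {i : ℕ}
    (hi : i < L.length) : Nat.ofDigits k L / k ^ i % k = L[i] := by
  have hk : 0 < k := (Nat.zero_le _).trans_lt (hL _ (List.getElem_mem hi))
  rw [Nat.ofDigits_div_pow_eq_ofDigits_drop i hk L hL, Nat.ofDigits_mod_eq_head!,
    List.head!_eq_head?_getD, List.head?_drop, List.getElem?_eq_getElem hi, Option.getD_some,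
    Nat.mod_eq_of_lt (hL _ (List.getElem_mem hi))]

theorem Nat.ofDigits_lt_pow_length {k : ℕ} {L : List ℕ} (hL : ∀ l ∈ L, l < k) :
    Nat.ofDigits k L < k ^ L.length := by
  induction L with
  | nil => simp
  | cons l L ih =>
    simp only [List.mem_cons, forall_eq_or_imp] at hL
    rw [Nat.ofDigits_cons, List.length_cons, pow_succ']
    have := ih hL.2
    nlinarith [hL.1]

section Decode

variable {Q : Type*} {k : ℕ} [NeZero k] (e : Q ≃ Fin k)

/-- Reads `a` as a base-`k` numeral whose digit number `Nat.pair i j` is the colour at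
`(i - R, j - R)`. -/
def decode (R a : ℕ) : Config Q :=
  fun z => e.symm (Fin.ofNat k (a / k ^ Nat.pair (z.1 + R).toNat (z.2 + R).toNat))

theorem exists_decode_eqOn (g : Config Q) (R : ℕ) :
    ∃ a < k ^ (2 * R + 1) ^ 2, ∀ z ∈ square R, decode e R a z = g z := by
  let L := List.ofFn fun t : Fin ((2 * R + 1) ^ 2) =>
    (e (g (((Nat.unpair t).1 : ℤ) - R, ((Nat.unpair t).2 : ℤ) - R)) : ℕ)
  have hL : ∀ l ∈ L, l < k := by simp [L, List.mem_ofFn]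
  refine ⟨Nat.ofDigits k L, by simpa [L] using Nat.ofDigits_lt_pow_length hL, fun z hz => ?_⟩
  rw [mem_square] at hz
  have hpair : Nat.pair (z.1 + R).toNat (z.2 + R).toNat < (2 * R + 1) ^ 2 :=
    (Nat.pair_lt_max_add_one_sq _ _).trans_le (Nat.pow_le_pow_left (by omega) 2)
  rw [decode, e.symm_apply_eq, Fin.ext_iff, Fin.val_ofNat,
    Nat.ofDigits_div_pow_mod hL (by simpa [L] using hpair)]
  simp only [L, List.getElem_ofFn, Nat.unpair_pair]
  congr 3
  ext <;> simp only <;> omega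

theorem isRecurrenceBound_iff_decode {F : Set (Pattern Q)} {r : ℕ}
    (hr : ∀ T ∈ F, T.dom ⊆ square r) (n m : ℕ) :
    IsRecurrenceBound F n m ↔ n + 1 ≤ m ∧ ∀ a < k ^ (2 * (2 * m + r) + 1) ^ 2,
      ValidOn F (decode e (2 * m + r) a) (2 * m) →
        SquareRecurrent (decode e (2 * m + r) a) n m := by
  refine and_congr_right fun hnm => ⟨fun h a _ => h _, fun h g hg => ?_⟩
  obtain ⟨a, ha, hag⟩ := exists_decode_eqOn e g (2 * m + r)
  exact (h a ha (hg.of_eqOn hr fun z hz => (hag z hz).symm)).of_eqOn (by omega)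
    fun z hz => hag z (square_mono (by omega) hz)

end Decode

section Computability

open Primrec

variable {α β : Type*} [Primcodable α]

theorem Primrec.nat_add' {f g : α → ℕ} (hf : Primrec f) (hg : Primrec g) :
    Primrec fun a => f a + g a := nat_add.comp hf hg

theorem Primrec.nat_sub' {f g : α → ℕ} (hf : Primrec f) (hg : Primrec g) :
    Primrec fun a => f a - g a := nat_sub.comp hf hg

theorem Primrec.nat_mul' {f g : α → ℕ} (hf : Primrec f) (hg : Primrec g) :
    Primrec fun a => f a * g a := nat_mul.comp hf hg

theorem Primrec.nat_div' {f g : α → ℕ} (hf : Primrec f) (hg : Primrec g) :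
    Primrec fun a => f a / g a := nat_div.comp hf hg

theorem Primrec.nat_mod' {f g : α → ℕ} (hf : Primrec f) (hg : Primrec g) :
    Primrec fun a => f a % g a := nat_mod.comp hf hg

theorem Primrec.nat_pow' {f g : α → ℕ} (hf : Primrec f) (hg : Primrec g) :
    Primrec fun a => f a ^ g a :=
  (Primrec₂.unpaired'.1 Nat.Primrec.pow).comp hf hg

theorem Primrec.nat_pair' {f g : α → ℕ} (hf : Primrec f) (hg : Primrec g) :
    Primrec fun a => Nat.pair (f a) (g a) := Primrec₂.natPair.comp hf hg

attribute [local fun_prop] Primrec Primrec.const Primrec.comp Primrec.fst Primrec.snd Primrec.pair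
  Primrec.nat_add' Primrec.nat_sub' Primrec.nat_mul' Primrec.nat_div' Primrec.nat_mod'
  Primrec.nat_pow' Primrec.nat_pair'

theorem PrimrecPred.imp {p q : α → Prop} (hp : PrimrecPred p) (hq : PrimrecPred q) :
    PrimrecPred fun a => p a → q a :=
  (hp.not.or hq).of_eq fun _ => imp_iff_not_or.symm

theorem PrimrecPred.forall_mem_finset (s : Finset β) {P : β → α → Prop}
    (hP : ∀ b ∈ s, PrimrecPred (P b)) : PrimrecPred fun a => ∀ b ∈ s, P b a := by
  classical
  induction s using Finset.induction_on with
  | empty => exact (Primrec.eq.comp (const 0) (const 0)).of_eq fun _ => by simp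
  | insert b s _ ih =>
    simp only [Finset.forall_mem_insert]
    exact (hP b (Finset.mem_insert_self b s)).and
      (ih fun b hb => hP b (Finset.mem_insert_of_mem hb))

theorem PrimrecPred.forall_lt' {P : α → ℕ → Prop} {N : α → ℕ}
    (hP : PrimrecPred fun x : α × ℕ => P x.1 x.2) (hN : Primrec N) :
    PrimrecPred fun a => ∀ i < N a, P a i := by
  have : PrimrecRel fun (i : ℕ) (a : α) => P a i := hP.comp (Primrec.snd.pair Primrec.fst)
  exact (this.forall_mem_list.comp (list_range.comp hN) Primrec.id).of_eq fun _ => by simp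

theorem PrimrecPred.exists_lt' {P : α → ℕ → Prop} {N : α → ℕ}
    (hP : PrimrecPred fun x : α × ℕ => P x.1 x.2) (hN : Primrec N) :
    PrimrecPred fun a => ∃ i < N a, P a i := by
  have : PrimrecRel fun (i : ℕ) (a : α) => P a i := hP.comp (Primrec.snd.pair Primrec.fst)
  exact (this.exists_mem_list.comp (list_range.comp hN) Primrec.id).of_eq fun _ => by simp

theorem PrimrecPred.forall_mem_square {P : α → ℤ × ℤ → Prop} {N : α → ℕ} (hN : Primrec N)
    (hP : PrimrecPred fun x : (α × ℕ) × ℕ =>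
      P x.1.1 ((x.1.2 : ℤ) - N x.1.1, (x.2 : ℤ) - N x.1.1)) :
    PrimrecPred fun a => ∀ z ∈ square (N a), P a z :=
  (PrimrecPred.forall_lt' (PrimrecPred.forall_lt' hP (by fun_prop)) (by fun_prop)).of_eq
    fun _ => forall_mem_square_iff.symm

theorem PrimrecPred.exists_mem_square {P : α → ℤ × ℤ → Prop} {N : α → ℕ} (hN : Primrec N)
    (hP : PrimrecPred fun x : (α × ℕ) × ℕ =>
      P x.1.1 ((x.1.2 : ℤ) - N x.1.1, (x.2 : ℤ) - N x.1.1)) :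
    PrimrecPred fun a => ∃ z ∈ square (N a), P a z :=
  (PrimrecPred.exists_lt' (PrimrecPred.exists_lt' hP (by fun_prop)) (by fun_prop)).of_eq
    fun _ => exists_mem_square_iff.symm

/-- Mathlib has no `Primcodable ℤ`; lattice points are handled through their coordinates
written as differences of natural numbers. -/
def PrimrecPoint (f : α → ℤ × ℤ) : Prop :=
  ∃ A B C D : α → ℕ, Primrec A ∧ Primrec B ∧ Primrec C ∧ Primrec D ∧
    ∀ y, f y = ((A y : ℤ) - B y, (C y : ℤ) - D y)

theorem PrimrecPoint.mk {A B C D : α → ℕ} (hA : Primrec A) (hB : Primrec B) (hC : Primrec C)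
    (hD : Primrec D) : PrimrecPoint fun y => ((A y : ℤ) - B y, (C y : ℤ) - D y) :=
  ⟨A, B, C, D, hA, hB, hC, hD, fun _ => rfl⟩

theorem PrimrecPoint.const (z : ℤ × ℤ) : PrimrecPoint fun _ : α => z :=
  ⟨fun _ => z.1.toNat, fun _ => (-z.1).toNat, fun _ => z.2.toNat, fun _ => (-z.2).toNat,
    Primrec.const _, Primrec.const _, Primrec.const _, Primrec.const _,
    fun _ => Prod.ext (by simp only; omega) (by simp only; omega)⟩

theorem PrimrecPoint.add {f g : α → ℤ × ℤ} (hf : PrimrecPoint f) (hg : PrimrecPoint g) :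
    PrimrecPoint fun y => f y + g y := by
  obtain ⟨A, B, C, D, hA, hB, hC, hD, hf⟩ := hf
  obtain ⟨A', B', C', D', hA', hB', hC', hD', hg⟩ := hg
  refine ⟨fun y => A y + A' y, fun y => B y + B' y, fun y => C y + C' y, fun y => D y + D' y,
    by fun_prop, by fun_prop, by fun_prop, by fun_prop, fun y => ?_⟩
  simp only [hf, hg, Prod.mk_add_mk, Nat.cast_add]
  congr 1 <;> ring

variable {Q : Type*} {k : ℕ} [NeZero k] (e : Q ≃ Fin k)

theorem PrimrecPoint.primrec_decode {f : α → ℤ × ℤ} (hf : PrimrecPoint f) {R a : α → ℕ}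
    (hR : Primrec R) (ha : Primrec a) :
    Primrec fun y => (e (decode e (R y) (a y) (f y)) : ℕ) := by
  obtain ⟨A, B, C, D, hA, hB, hC, hD, hf⟩ := hf
  have : Primrec fun y => a y / k ^ Nat.pair (A y + R y - B y) (C y + R y - D y) % k := by
    fun_prop
  refine this.of_eq fun y => ?_
  rw [hf, decode, Equiv.apply_symm_apply, Fin.val_ofNat]
  congr 4 <;> omega

theorem PrimrecPoint.primrecPred_decode_eq {f g : α → ℤ × ℤ} (hf : PrimrecPoint f)
    (hg : PrimrecPoint g) {R a : α → ℕ} (hR : Primrec R) (ha : Primrec a) :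
    PrimrecPred fun y => decode e (R y) (a y) (f y) = decode e (R y) (a y) (g y) :=
  (Primrec.eq.comp (hf.primrec_decode e hR ha) (hg.primrec_decode e hR ha)).of_eq fun _ => by
    rw [Fin.val_inj, e.apply_eq_iff_eq]

theorem PrimrecPoint.primrecPred_decode_eq_const {f : α → ℤ × ℤ} (hf : PrimrecPoint f)
    {R a : α → ℕ} (hR : Primrec R) (ha : Primrec a) (q : Q) :
    PrimrecPred fun y => decode e (R y) (a y) (f y) = q :=
  (Primrec.eq.comp (hf.primrec_decode e hR ha) (Primrec.const (e q : ℕ))).of_eq fun _ => by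
    rw [Fin.val_inj, e.apply_eq_iff_eq]

variable {F : Set (Pattern Q)}

theorem primrecPred_validOn_decode (hF : F.Finite) {R a N : α → ℕ} (hR : Primrec R)
    (ha : Primrec a) (hN : Primrec N) :
    PrimrecPred fun y => ValidOn F (decode e (R y) (a y)) (N y) := by
  have hT : ∀ T ∈ hF.toFinset, PrimrecPred fun y =>
      ∀ v ∈ square (N y), ¬ ∀ x ∈ T.dom, decode e (R y) (a y) (v + x) = T.val x :=
    fun T _ => PrimrecPred.forall_mem_square hN
      (PrimrecPred.forall_mem_finset T.dom fun x _ =>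
        ((PrimrecPoint.mk (by fun_prop) (by fun_prop) (by fun_prop) (by fun_prop)).add
          (PrimrecPoint.const x)).primrecPred_decode_eq_const e (by fun_prop) (by fun_prop) _).not
  exact (PrimrecPred.forall_mem_finset _ hT).of_eq fun y => by
    simp only [ValidOn, Set.Finite.mem_toFinset]

theorem primrecPred_squareRecurrent_decode {R a n m : α → ℕ} (hR : Primrec R) (ha : Primrec a)
    (hn : Primrec n) (hm : Primrec m) :
    PrimrecPred fun y => SquareRecurrent (decode e (R y) (a y)) (n y) (m y) := by
  refine PrimrecPred.forall_mem_square (by fun_prop) (PrimrecPred.exists_mem_square (by fun_prop)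
    (PrimrecPred.forall_mem_square (by fun_prop) ?_))
  exact PrimrecPoint.primrecPred_decode_eq e
    ((PrimrecPoint.mk (by fun_prop) (by fun_prop) (by fun_prop) (by fun_prop)).add
      (PrimrecPoint.mk (by fun_prop) (by fun_prop) (by fun_prop) (by fun_prop)))
    ((PrimrecPoint.mk (by fun_prop) (by fun_prop) (by fun_prop) (by fun_prop)).add
      (PrimrecPoint.mk (by fun_prop) (by fun_prop) (by fun_prop) (by fun_prop)))
    (by fun_prop) (by fun_prop)

theorem primrecPred_isRecurrenceBound [Fintype Q] (hF : F.Finite) :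
    PrimrecPred fun x : ℕ × ℕ => IsRecurrenceBound F x.1 x.2 := by
  have hle : PrimrecPred fun x : ℕ × ℕ => x.1 + 1 ≤ x.2 := nat_le.comp (by fun_prop) snd
  cases isEmpty_or_nonempty Q with
  | inl hQ =>
    exact hle.of_eq fun x => ⟨fun h => ⟨h, fun g => (IsEmpty.false (g 0)).elim⟩, And.left⟩
  | inr hQ =>
    obtain ⟨r, hr⟩ : ∃ r, ∀ T ∈ F, T.dom ⊆ square r := by
      obtain ⟨r, hr⟩ := Finset.exists_subset_square (hF.toFinset.biUnion Pattern.dom)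
      exact ⟨r, fun T hT x hx => hr (Finset.mem_biUnion.2 ⟨T, hF.mem_toFinset.2 hT, hx⟩)⟩
    let e := Fintype.equivFin Q
    refine (hle.and (PrimrecPred.forall_lt' ((primrecPred_validOn_decode e hF ?_ ?_ ?_).imp
      (primrecPred_squareRecurrent_decode e ?_ ?_ ?_ ?_)) (by fun_prop))).of_eq
      fun x => (isRecurrenceBound_iff_decode e hr _ _).symm
    all_goals fun_prop

end Computability

theorem stmt4_general {Q : Type} [Fintype Q] (F : Set (Pattern Q)) (hF : F.Finite)
    (hqp : ∀ c : Config Q, ValidFor F c → QuasiPeriodic c) :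
    ∃ q : ℕ → ℕ, Computable q ∧
      ∀ c : Config Q, ValidFor F c → ∀ n : ℕ, ∀ P : Pattern Q,
        P.dom = square n → P.appearsIn c →
          ∀ v : ℤ × ℤ, P.appearsInPat (subPattern c v (square (q n))) := by
  classical
  have hbound : ∀ n, ∃ m, IsRecurrenceBound F n m := exists_isRecurrenceBound hqp
  refine ⟨fun n => Nat.find (hbound n),
    Computable.find (primrecPred_isRecurrenceBound hF).computablePred hbound,
    fun c hc n P hP happ v => (Nat.find_spec (hbound n)).appearsInPat hc hP happ v⟩

/-- If a tileset given by a finite set of forbidden patterns admits only quasi-periodic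
tilings, there is a total computable `q : ℕ → ℕ` bounding the quasi-periodicity function
of every valid tiling: every pattern of `c` with domain `[-n,n]^2` appears in every
pattern of `c` with domain (a translate of) `[-q n, q n]^2`. -/
theorem stmt4 {Q : Type} [Fintype Q] [DecidableEq Q] (F : Set (Pattern Q)) (hF : F.Finite)
    (hqp : ∀ c : Config Q, ValidFor F c → QuasiPeriodic c) :
    ∃ q : ℕ → ℕ, Computable q ∧
      ∀ c : Config Q, ValidFor F c → ∀ n : ℕ, ∀ P : Pattern Q,
        P.dom = square n → P.appearsIn c →
          ∀ v : ℤ × ℤ, P.appearsInPat (subPattern c v (square (q n))) :=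
  stmt4_general F hF hqp
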